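/- Let A be a finite alphabet and k a positive integer. Then F_k = F_1^k = (P_1 ∪ S_1)^k, where F_1^k denotes the k-fold composition of the relation F_1 with itself. In particular F_1 = P_1 ∪ S_1. -/

import Mathlib

open scoped ENNReal

/-- Length of a longest common prefix of `w` and `w'`. -/
noncomputable def lcpLen {A : Type*} (w w' : List A) : ℕ :=
  sSup {n | ∃ p : List A, p.length = n ∧ p <+: w ∧ p <+: w'}

/-- The prefix distance `d_P(w,w') = |w| + |w'| - 2|w ∧ w'|`. -/
noncomputable def dP {A : Type*} (w w' : List A) : ℕ :=
  w.length + w'.length - 2 * lcpLen w w'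

/-- Length of a longest common suffix of `w` and `w'`. -/
noncomputable def lcsLen {A : Type*} (w w' : List A) : ℕ :=
  sSup {n | ∃ s : List A, s.length = n ∧ s <:+ w ∧ s <:+ w'}

/-- The suffix distance `d_S(w,w') = |w| + |w'| - 2|s|`. -/
noncomputable def dS {A : Type*} (w w' : List A) : ℕ :=
  w.length + w'.length - 2 * lcsLen w w'

/-- Length of a longest common factor of `w` and `w'`. -/
noncomputable def lcfLen {A : Type*} (w w' : List A) : ℕ :=
  sSup {n | ∃ f : List A, f.length = n ∧ f <:+: w ∧ f <:+: w'}

/-- The factor distance `d_F(w,w') = |w| + |w'| - 2|f|`,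
`f` a maximum-length common factor. -/
noncomputable def dF {A : Type*} (w w' : List A) : ℕ :=
  w.length + w'.length - 2 * lcfLen w w'

/-- `n`-fold composition of a binary relation. -/
def relPow {α : Type*} (r : α → α → Prop) : ℕ → α → α → Prop
  | 0 => Eq
  | n + 1 => Relation.Comp (relPow r n) r

/-- `X` is a (variable-length) code: every word of `X*` factorizes uniquely over `X`. -/
def IsCode {A : Type*} (X : Set (List A)) : Prop :=
  ∀ l m : List (List A), (∀ x ∈ l, x ∈ X) → (∀ x ∈ m, x ∈ X) →
    l.flatten = m.flatten → l = m

/-- `X` is complete: every word is a factor of some word of `X*`. -/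
def IsCompleteSet {A : Type*} (X : Set (List A)) : Prop :=
  ∀ w : List A, ∃ l : List (List A), (∀ x ∈ l, x ∈ X) ∧ w <:+: l.flatten

/-- `X ⊆ A*` is a regular language: accepted by a finite deterministic automaton. -/
def IsRegularLang {A : Type*} (X : Set (List A)) : Prop :=
  ∃ (Q : Type) (_ : Fintype Q) (M : DFA A Q), M.accepts = X

/-- The uniform Bernoulli measure `μ(X) = Σ_{x ∈ X} |A|^{-|x|}`. -/
noncomputable def mu (A : Type*) [Fintype A] (X : Set (List A)) : ℝ≥0∞ :=
  ∑' x : X, ((Fintype.card A : ℝ≥0∞))⁻¹ ^ (x : List A).length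

/-!
A longest common factor `f` of `w` and `w'` realises `dF w w' = |w| + |w'| - 2|f|`. Two words are
at factor distance at most one exactly when one arises from the other by deleting a letter at one
end; such a step moves `dF w ·` by at most one, since a common factor loses at most an end letter.
Conversely, a pair at distance `d + 1` is one step away from a pair at distance `d`: delete a letter
of `w'` lying outside `f`, or, if `w' = f`, extend `f` by one letter inside `w`. Deleting a letter
at the right (left) end is a prefix (suffix) step, whence `F₁ = P₁ ∪ S₁`.
-/

section

open List

variable {A : Type*}

namespace List

theorem IsInfix.tail {f v : List A} (h : f <:+: v) : f.tail <:+: v.tail := by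
  obtain ⟨s, t, rfl⟩ := h
  rcases s with _ | ⟨a, s⟩
  · rcases f with _ | ⟨b, f⟩
    · exact nil_infix
    · exact ⟨[], t, by simp⟩
  · exact (tail_suffix f).isInfix.trans ⟨s, t, by simp⟩

theorem IsInfix.dropLast {f v : List A} (h : f <:+: v) : f.dropLast <:+: v.dropLast := by
  obtain ⟨s, t, rfl⟩ := h
  rcases t.eq_nil_or_concat with rfl | ⟨t, b, rfl⟩
  · rcases eq_or_ne f [] with rfl | hf
    · exact nil_infix
    · exact ⟨s, [], by simp [dropLast_append_of_ne_nil hf]⟩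
  · exact (dropLast_prefix f).isInfix.trans ⟨s, t, by simp⟩

theorem IsInfix.infix_tail_or_infix_dropLast {f v : List A} (h : f <:+: v)
    (hlt : f.length < v.length) : f <:+: v.tail ∨ f <:+: v.dropLast := by
  obtain ⟨s, t, rfl⟩ := h
  rcases s with _ | ⟨a, s⟩
  · rcases t.eq_nil_or_concat with rfl | ⟨t, b, rfl⟩
    · simp at hlt
    · exact Or.inr ⟨[], t, by simp⟩
  · exact Or.inl ⟨s, t, by simp⟩

theorem IsInfix.exists_cons_infix_or_concat_infix {f v : List A} (h : f <:+: v)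
    (hlt : f.length < v.length) : ∃ a, a :: f <:+: v ∨ f ++ [a] <:+: v := by
  obtain ⟨s, t, rfl⟩ := h
  rcases s.eq_nil_or_concat with rfl | ⟨s, a, rfl⟩
  · rcases t with _ | ⟨a, t⟩
    · simp at hlt
    · exact ⟨a, Or.inr ⟨[], t, by simp⟩⟩
  · exact ⟨a, Or.inl ⟨s, t, by simp⟩⟩

theorem IsInfix.eq_or_eq_tail_or_eq_dropLast {u v : List A} (h : u <:+: v)
    (hl : v.length ≤ u.length + 1) : u = v ∨ u = v.tail ∨ u = v.dropLast := by
  rcases (h.length_le).eq_or_lt with heq | hlt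
  · exact Or.inl (h.eq_of_length heq)
  · have hl' : u.length = v.length - 1 := by omega
    rcases h.infix_tail_or_infix_dropLast hlt with ht | hd
    · exact Or.inr (Or.inl (ht.eq_of_length (by rw [length_tail, hl'])))
    · exact Or.inr (Or.inr (hd.eq_of_length (by rw [length_dropLast, hl'])))

end List

theorem exists_length_eq_sSup_length {P : List A → Prop} (N : ℕ) (h0 : P [])
    (hN : ∀ f, P f → f.length ≤ N) :
    ∃ f, f.length = sSup {n | ∃ f : List A, f.length = n ∧ P f} ∧ P f :=
  Nat.sSup_mem (s := {n | ∃ f : List A, f.length = n ∧ P f}) ⟨0, [], rfl, h0⟩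
    ⟨N, by rintro _ ⟨f, rfl, hf⟩; exact hN f hf⟩

theorem length_le_sSup_length {P : List A → Prop} (N : ℕ) (hN : ∀ f, P f → f.length ≤ N)
    {f : List A} (hf : P f) : f.length ≤ sSup {n | ∃ f : List A, f.length = n ∧ P f} :=
  le_csSup ⟨N, by rintro _ ⟨f, rfl, hf⟩; exact hN f hf⟩ ⟨f, rfl, hf⟩

section CommonSubwords

variable (w w' : List A)

theorem exists_length_eq_lcpLen : ∃ p, p.length = lcpLen w w' ∧ p <+: w ∧ p <+: w' :=
  exists_length_eq_sSup_length w.length ⟨nil_prefix, nil_prefix⟩ fun _ hp => hp.1.length_le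

theorem exists_length_eq_lcsLen : ∃ s, s.length = lcsLen w w' ∧ s <:+ w ∧ s <:+ w' :=
  exists_length_eq_sSup_length w.length ⟨nil_suffix, nil_suffix⟩ fun _ hs => hs.1.length_le

theorem exists_length_eq_lcfLen : ∃ f, f.length = lcfLen w w' ∧ f <:+: w ∧ f <:+: w' :=
  exists_length_eq_sSup_length w.length ⟨nil_infix, nil_infix⟩ fun _ hf => hf.1.length_le

variable {w w'}

theorem length_le_lcpLen {p : List A} (h : p <+: w) (h' : p <+: w') : p.length ≤ lcpLen w w' :=
  length_le_sSup_length w.length (fun _ hp => hp.1.length_le) ⟨h, h'⟩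

theorem length_le_lcsLen {s : List A} (h : s <:+ w) (h' : s <:+ w') : s.length ≤ lcsLen w w' :=
  length_le_sSup_length w.length (fun _ hs => hs.1.length_le) ⟨h, h'⟩

theorem length_le_lcfLen {f : List A} (h : f <:+: w) (h' : f <:+: w') : f.length ≤ lcfLen w w' :=
  length_le_sSup_length w.length (fun _ hf => hf.1.length_le) ⟨h, h'⟩

variable (w w')

theorem lcpLen_comm : lcpLen w w' = lcpLen w' w := by
  simp only [lcpLen, and_comm]

theorem lcsLen_comm : lcsLen w w' = lcsLen w' w := by
  simp only [lcsLen, and_comm]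

theorem lcfLen_comm : lcfLen w w' = lcfLen w' w := by
  simp only [lcfLen, and_comm]

end CommonSubwords

section Distances

variable {u v w w' : List A}

theorem dP_comm (w w' : List A) : dP w w' = dP w' w := by
  rw [dP, dP, lcpLen_comm, Nat.add_comm]

theorem dS_comm (w w' : List A) : dS w w' = dS w' w := by
  rw [dS, dS, lcsLen_comm, Nat.add_comm]

theorem dF_comm (w w' : List A) : dF w w' = dF w' w := by
  rw [dF, dF, lcfLen_comm, Nat.add_comm]

theorem dP_eq_of_isPrefix (h : u <+: v) : dP u v = v.length - u.length := by
  obtain ⟨p, hp, hpu, -⟩ := exists_length_eq_lcpLen u v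
  have := length_le_lcpLen (prefix_refl u) h
  have := hpu.length_le
  unfold dP
  omega

theorem dS_eq_of_isSuffix (h : u <:+ v) : dS u v = v.length - u.length := by
  obtain ⟨s, hs, hsu, -⟩ := exists_length_eq_lcsLen u v
  have := length_le_lcsLen (suffix_refl u) h
  have := hsu.length_le
  unfold dS
  omega

theorem dF_eq_of_isInfix (h : u <:+: v) : dF u v = v.length - u.length := by
  obtain ⟨f, hf, hfu, -⟩ := exists_length_eq_lcfLen u v
  have := length_le_lcfLen (infix_refl u) h
  have := hfu.length_le
  unfold dF
  omega

theorem dF_self (w : List A) : dF w w = 0 := by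
  simp [dF_eq_of_isInfix (infix_refl w)]

theorem eq_of_dF_eq_zero (h : dF w w' = 0) : w = w' := by
  obtain ⟨f, hf, hfw, hfw'⟩ := exists_length_eq_lcfLen w w'
  have := hfw.length_le
  have := hfw'.length_le
  unfold dF at h
  rw [← hfw.eq_of_length (by omega), ← hfw'.eq_of_length (by omega)]

theorem dF_le_dP (w w' : List A) : dF w w' ≤ dP w w' := by
  obtain ⟨p, hp, hpw, hpw'⟩ := exists_length_eq_lcpLen w w'
  have := length_le_lcfLen hpw.isInfix hpw'.isInfix
  unfold dF dP
  omega

theorem dF_le_dS (w w' : List A) : dF w w' ≤ dS w w' := by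
  obtain ⟨s, hs, hsw, hsw'⟩ := exists_length_eq_lcsLen w w'
  have := length_le_lcfLen hsw.isInfix hsw'.isInfix
  unfold dF dS
  omega

theorem dF_le_one_iff :
    dF v w ≤ 1 ↔ v = w ∨ v = w.tail ∨ v = w.dropLast ∨ w = v.tail ∨ w = v.dropLast := by
  constructor
  · intro h
    obtain ⟨f, hf, hfv, hfw⟩ := exists_length_eq_lcfLen v w
    have := hfv.length_le
    have := hfw.length_le
    unfold dF at h
    rcases (hfv.length_le).eq_or_lt with hv | hv
    · obtain rfl := hfv.eq_of_length hv
      rcases hfw.eq_or_eq_tail_or_eq_dropLast (by omega) with h' | h' | h' <;> simp [h']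
    · obtain rfl := hfw.eq_of_length (by omega)
      rcases hfv.eq_or_eq_tail_or_eq_dropLast (by omega) with h' | h' | h' <;> simp [h']
  · rintro (rfl | rfl | rfl | rfl | rfl)
    · simp [dF_self]
    · rw [dF_eq_of_isInfix (tail_suffix w).isInfix, length_tail]; omega
    · rw [dF_eq_of_isInfix (dropLast_prefix w).isInfix, length_dropLast]; omega
    · rw [dF_comm, dF_eq_of_isInfix (tail_suffix v).isInfix, length_tail]; omega
    · rw [dF_comm, dF_eq_of_isInfix (dropLast_prefix v).isInfix, length_dropLast]; omega

theorem dF_le_one_iff_dP_le_one_or_dS_le_one : dF v w ≤ 1 ↔ dP v w ≤ 1 ∨ dS v w ≤ 1 := by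
  refine ⟨fun h => ?_, fun h => h.elim (dF_le_dP v w).trans (dF_le_dS v w).trans⟩
  rcases dF_le_one_iff.mp h with rfl | rfl | rfl | rfl | rfl
  · simp [dP_eq_of_isPrefix (prefix_refl v)]
  · rw [dS_eq_of_isSuffix (tail_suffix w), length_tail]; omega
  · rw [dP_eq_of_isPrefix (dropLast_prefix w), length_dropLast]; omega
  · rw [dS_comm, dS_eq_of_isSuffix (tail_suffix v), length_tail]; omega
  · rw [dP_comm, dP_eq_of_isPrefix (dropLast_prefix v), length_dropLast]; omega

end Distances

section Triangle

variable {v v' w w' : List A}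

theorem dF_le_of_isInfix_right (w : List A) (h : v <:+: v') :
    dF w v' ≤ dF w v + (v'.length - v.length) := by
  obtain ⟨f, hf, hfw, hfv⟩ := exists_length_eq_lcfLen w v
  have := length_le_lcfLen hfw (hfv.trans h)
  have := h.length_le
  unfold dF
  omega

theorem dF_tail_right_le (w v : List A) : dF w v.tail ≤ dF w v + 1 := by
  obtain ⟨f, hf, hfw, hfv⟩ := exists_length_eq_lcfLen w v
  have := length_le_lcfLen ((tail_suffix f).isInfix.trans hfw) hfv.tail
  have := hfv.length_le
  have := hfw.length_le
  unfold dF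
  rw [length_tail] at *
  omega

theorem dF_dropLast_right_le (w v : List A) : dF w v.dropLast ≤ dF w v + 1 := by
  obtain ⟨f, hf, hfw, hfv⟩ := exists_length_eq_lcfLen w v
  have := length_le_lcfLen ((dropLast_prefix f).isInfix.trans hfw) hfv.dropLast
  have := hfv.length_le
  have := hfw.length_le
  unfold dF
  rw [length_dropLast] at *
  omega

theorem dF_le_dF_add_one_of_dF_le_one (w : List A) (h : dF v v' ≤ 1) :
    dF w v' ≤ dF w v + 1 := by
  rcases dF_le_one_iff.mp h with rfl | rfl | rfl | rfl | rfl
  · omega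
  · have := dF_le_of_isInfix_right w (tail_suffix v').isInfix
    rw [length_tail] at this
    omega
  · have := dF_le_of_isInfix_right w (dropLast_prefix v').isInfix
    rw [length_dropLast] at this
    omega
  · exact dF_tail_right_le w v
  · exact dF_dropLast_right_le w v

theorem exists_dF_le_of_dF_eq_succ {d : ℕ} (h : dF w w' = d + 1) :
    ∃ v, dF w v ≤ d ∧ dF v w' ≤ 1 := by
  obtain ⟨f, hf, hfw, hfw'⟩ := exists_length_eq_lcfLen w w'
  have := hfw.length_le
  have := hfw'.length_le
  unfold dF at h
  rcases (hfw'.length_le).lt_or_eq with hlt | heq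
  · rcases hfw'.infix_tail_or_infix_dropLast hlt with hv | hv
    · refine ⟨w'.tail, ?_, dF_le_one_iff.mpr (by simp)⟩
      have := length_le_lcfLen hfw hv
      unfold dF
      rw [length_tail]
      omega
    · refine ⟨w'.dropLast, ?_, dF_le_one_iff.mpr (by simp)⟩
      have := length_le_lcfLen hfw hv
      unfold dF
      rw [length_dropLast]
      omega
  · obtain rfl := hfw'.eq_of_length heq
    obtain ⟨a, hv | hv⟩ := hfw.exists_cons_infix_or_concat_infix (by omega)
    · refine ⟨a :: f, ?_, dF_le_one_iff.mpr (by simp)⟩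
      rw [dF_comm, dF_eq_of_isInfix hv, length_cons]
      omega
    · refine ⟨f ++ [a], ?_, dF_le_one_iff.mpr (by simp)⟩
      rw [dF_comm, dF_eq_of_isInfix hv, length_append, length_singleton]
      omega

theorem relPow_dF_le_one_iff (k : ℕ) (w w' : List A) :
    relPow (fun a b => dF a b ≤ 1) k w w' ↔ dF w w' ≤ k := by
  induction k generalizing w' with
  | zero =>
    refine ⟨fun h => ?_, fun h => eq_of_dF_eq_zero (Nat.le_zero.mp h)⟩
    cases h
    exact (dF_self w).le
  | succ k ih =>
    refine ⟨fun ⟨v, hv, hvw'⟩ => ?_, fun h => ?_⟩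
    · have := (ih v).mp hv
      exact (dF_le_dF_add_one_of_dF_le_one w hvw').trans (by omega)
    · by_cases hk : dF w w' ≤ k
      · exact ⟨w', (ih w').mpr hk, (dF_self w').le.trans zero_le_one⟩
      · obtain ⟨v, hv, hvw'⟩ := exists_dF_le_of_dF_eq_succ (by omega : dF w w' = k + 1)
        exact ⟨v, (ih v).mpr hv, hvw'⟩

end Triangle

end

theorem stmt_6_general {A : Type*} (k : ℕ) :
    (∀ w w' : List A, dF w w' ≤ k ↔ relPow (fun a b : List A => dF a b ≤ 1) k w w') ∧
    (∀ w w' : List A,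
      dF w w' ≤ k ↔ relPow (fun a b : List A => dP a b ≤ 1 ∨ dS a b ≤ 1) k w w') ∧
    (∀ w w' : List A, dF w w' ≤ 1 ↔ (dP w w' ≤ 1 ∨ dS w w' ≤ 1)) := by
  have hF₁ : (fun a b : List A => dP a b ≤ 1 ∨ dS a b ≤ 1) = fun a b => dF a b ≤ 1 := by
    funext a b
    exact propext dF_le_one_iff_dP_le_one_or_dS_le_one.symm
  refine ⟨fun w w' => (relPow_dF_le_one_iff k w w').symm, fun w w' => ?_,
    fun w w' => dF_le_one_iff_dP_le_one_or_dS_le_one⟩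
  rw [hF₁]
  exact (relPow_dF_le_one_iff k w w').symm

/-- `F_k = F_1^k = (P_1 ∪ S_1)^k`; in particular `F_1 = P_1 ∪ S_1`. -/
theorem stmt_6 {A : Type*} [Fintype A] (hA : 2 ≤ Fintype.card A)
    (k : ℕ) (hk : 1 ≤ k) :
    (∀ w w' : List A, dF w w' ≤ k ↔ relPow (fun a b : List A => dF a b ≤ 1) k w w') ∧
    (∀ w w' : List A,
      dF w w' ≤ k ↔ relPow (fun a b : List A => dP a b ≤ 1 ∨ dS a b ≤ 1) k w w') ∧
    (∀ w w' : List A, dF w w' ≤ 1 ↔ (dP w w' ≤ 1 ∨ dS w w' ≤ 1)) :=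
  stmt_6_general k
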